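/- Hard-instance construction: let n > 1 and let π' be a permutation of {1,…,2n}. Define π to be the concatenation of π'_1 = ⟨π'(1),…,π'(n)⟩, π'_2 = ⟨4n, 4n−1, …, 2n+2⟩, π'_3 = ⟨π'(n+1),…,π'(2n)⟩, and π'_4 = ⟨2n+1⟩, in this order. Then π is a permutation of {1,…,4n} and lis(π) = lis(π') + 1. -/

import Mathlib

/-!
The decreasing block `⟨4n, …, 2n+2⟩` is an antichain lying above everything after it, so an
increasing subsequence that meets it has exactly one element there and nothing afterwards; it is
then no longer than an increasing subsequence of the first half plus one. An increasing
subsequence avoiding the block lives in `π' ++ [2n+1]`, and appending the maximum `2n+1`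
of that list raises its LIS by exactly one.
-/

/-- Length of a longest strictly increasing subsequence of a list. -/
noncomputable def lisL {α : Type*} [LT α] (l : List α) : ℕ :=
  sSup {m | ∃ t : List α, t.Sublist l ∧ t.Pairwise (· < ·) ∧ t.length = m}

open List

lemma perm_append_reverse_append_append_singleton {α : Type*} (A D C : List α) (x : α) :
    (A ++ D.reverse ++ C ++ [x]).Perm (A ++ C ++ x :: D) := by
  classical
  rw [perm_iff_count]
  intro a
  simp only [count_append, count_reverse, count_cons, count_nil]
  omega

section LongestIncreasingSubsequence

variable {α : Type*}

section LT

variable [LT α]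

lemma bddAbove_lisL_set (l : List α) :
    BddAbove {m | ∃ t : List α, t.Sublist l ∧ t.Pairwise (· < ·) ∧ t.length = m} :=
  ⟨l.length, fun _ ⟨_, ht, _, hm⟩ => hm ▸ ht.length_le⟩

lemma exists_sublist_pairwise_length_eq_lisL (l : List α) :
    ∃ t : List α, t.Sublist l ∧ t.Pairwise (· < ·) ∧ t.length = lisL l := by
  refine Nat.sSup_mem ?_ (bddAbove_lisL_set l)
  exact ⟨0, [], nil_sublist l, Pairwise.nil, rfl⟩

lemma length_le_lisL {l t : List α} (ht : t.Sublist l) (hs : t.Pairwise (· < ·)) :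
    t.length ≤ lisL l :=
  le_csSup (bddAbove_lisL_set l) ⟨t, ht, hs, rfl⟩

lemma List.Sublist.lisL_le {l₁ l₂ : List α} (h : l₁.Sublist l₂) : lisL l₁ ≤ lisL l₂ := by
  obtain ⟨t, ht, hs, hlen⟩ := exists_sublist_pairwise_length_eq_lisL l₁
  exact hlen ▸ length_le_lisL (ht.trans h) hs

lemma lisL_append_singleton_le (l : List α) (x : α) : lisL (l ++ [x]) ≤ lisL l + 1 := by
  obtain ⟨t, ht, hs, hlen⟩ := exists_sublist_pairwise_length_eq_lisL (l ++ [x])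
  obtain ⟨t₁, t₂, rfl, h₁, h₂⟩ := sublist_append_iff.mp ht
  have hlen₁ : t₁.length ≤ lisL l := length_le_lisL h₁ (hs.sublist (sublist_append_left _ _))
  have hlen₂ : t₂.length ≤ 1 := h₂.length_le
  rw [← hlen, length_append]
  omega

lemma lisL_append_singleton_of_forall_lt {l : List α} {x : α} (hx : ∀ a ∈ l, a < x) :
    lisL (l ++ [x]) = lisL l + 1 := by
  refine le_antisymm (lisL_append_singleton_le l x) ?_
  obtain ⟨t, ht, hs, hlen⟩ := exists_sublist_pairwise_length_eq_lisL l
  have hsx : (t ++ [x]).Pairwise (· < ·) :=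
    pairwise_append.2 ⟨hs, pairwise_singleton _ _,
      fun a ha _ hb => mem_singleton.1 hb ▸ hx a (ht.subset ha)⟩
  simpa [hlen] using length_le_lisL (ht.append (Sublist.refl [x])) hsx

end LT

section Preorder

variable [Preorder α]

lemma lisL_append_append_le_max {A D R : List α} (hD : D.Pairwise (· ≥ ·))
    (hDR : ∀ d ∈ D, ∀ r ∈ R, r ≤ d) :
    lisL (A ++ D ++ R) ≤ max (lisL (A ++ R)) (lisL A + 1) := by
  obtain ⟨t, ht, hs, hlen⟩ := exists_sublist_pairwise_length_eq_lisL (A ++ D ++ R)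
  rw [← hlen]
  obtain ⟨u, t₃, rfl, hu, h₃⟩ := sublist_append_iff.mp ht
  obtain ⟨t₁, t₂, rfl, h₁, h₂⟩ := sublist_append_iff.mp hu
  rcases t₂ with _ | ⟨b, t₂⟩
  · rw [append_nil] at hs ⊢
    exact le_max_of_le_left (length_le_lisL (h₁.append h₃) hs)
  · simp only [pairwise_append, mem_append] at hs
    obtain ⟨⟨hs₁, hs₂, -⟩, -, hs₁₂₃⟩ := hs
    have hbD : b ∈ D := h₂.subset mem_cons_self
    have ht₂ : t₂ = [] := eq_nil_iff_forall_not_mem.2 fun y hy =>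
      ((pairwise_cons.1 hs₂).1 y hy).not_ge ((pairwise_cons.1 (hD.sublist h₂)).1 y hy)
    have ht₃ : t₃ = [] := eq_nil_iff_forall_not_mem.2 fun r hr =>
      (hs₁₂₃ b (Or.inr mem_cons_self) r hr).not_ge (hDR b hbD r (h₃.subset hr))
    subst ht₂ ht₃
    refine le_max_of_le_right ?_
    simpa using length_le_lisL h₁ hs₁

theorem lisL_append_append_append_singleton {A D C : List α} {x : α}
    (hD : D.Pairwise (· ≥ ·)) (hxD : ∀ d ∈ D, x ≤ d) (hAC : ∀ a ∈ A ++ C, a < x) :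
    lisL (A ++ D ++ C ++ [x]) = lisL (A ++ C) + 1 := by
  have hDR : ∀ d ∈ D, ∀ r ∈ C ++ [x], r ≤ d := by
    intro d hd r hr
    rcases mem_append.1 hr with hr | hr
    · exact (hAC r (mem_append_right A hr)).le.trans (hxD d hd)
    · exact mem_singleton.1 hr ▸ hxD d hd
  have hlisAC : lisL (A ++ C ++ [x]) = lisL (A ++ C) + 1 :=
    lisL_append_singleton_of_forall_lt hAC
  refine le_antisymm ?_ (hlisAC ▸ Sublist.lisL_le (by simp))
  calc lisL (A ++ D ++ C ++ [x])
      ≤ max (lisL (A ++ (C ++ [x]))) (lisL A + 1) := by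
        simpa only [append_assoc] using lisL_append_append_le_max (A := A) hD hDR
    _ = lisL (A ++ C) + 1 := by
        rw [← append_assoc, hlisAC]
        exact max_eq_left (Nat.succ_le_succ (Sublist.lisL_le (sublist_append_left A C)))

end Preorder

end LongestIncreasingSubsequence

/-- Hard-instance construction: for `n > 1` and a permutation `π'` of `{1, …, 2n}`,
the concatenation `π` of the first half of `π'`, the decreasing block
`⟨4n, 4n-1, …, 2n+2⟩`, the second half of `π'`, and `⟨2n+1⟩` is a permutation of
`{1, …, 4n}` with `lis π = lis π' + 1`. -/
theorem hard_instance {n : ℕ} (hn : 1 < n) (π' : List ℕ)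
    (hperm : π'.Perm (List.range' 1 (2 * n)))
    (π : List ℕ)
    (hπ : π = π'.take n ++ (List.range' (2 * n + 2) (2 * n - 1)).reverse ++
      π'.drop n ++ [2 * n + 1]) :
    π.Perm (List.range' 1 (4 * n)) ∧ lisL π = lisL π' + 1 := by
  set B := List.range' (2 * n + 2) (2 * n - 1)
  have hrange : List.range' 1 (4 * n) = List.range' 1 (2 * n) ++ (2 * n + 1) :: B := by
    rw [show 4 * n = 2 * n + (2 * n - 1 + 1) by omega, ← range'_append, range'_succ]
    simp [B, Nat.add_comm 1]
  have hπ'_lt : ∀ a ∈ π'.take n ++ π'.drop n, a < 2 * n + 1 := by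
    intro a ha
    have := mem_range'_1.1 (hperm.subset (take_append_drop n π' ▸ ha))
    omega
  have hB_ge : ∀ d ∈ B.reverse, 2 * n + 1 ≤ d := by
    intro d hd
    have := mem_range'_1.1 (mem_reverse.1 hd)
    omega
  have hB_anti : B.reverse.Pairwise (· ≥ ·) := pairwise_reverse.2 (pairwise_le_range' 1)
  subst hπ
  refine ⟨?_, ?_⟩
  · rw [hrange]
    refine (perm_append_reverse_append_append_singleton _ _ _ _).trans ?_
    rw [take_append_drop]
    exact hperm.append_right _
  · rw [lisL_append_append_append_singleton hB_anti hB_ge hπ'_lt, take_append_drop]
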